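/- Let ρ ∈ (0,1), let π be a bounded probability density on [0,1], let p : {1,2,...} → [0,1] be a probability mass function (∑_{k≥1} p_k = 1) with probability generating function K̃(s) = ∑_{k≥1} p_k·s^k, let m > 0 and ζ > 0. Suppose f, f̂ : [0,1]² → ℝ are measurable and satisfy |f̂(x,y) − f(x,y)| ≤ ζ·π(x)·π(y)/(ρ·π(y) + 1−ρ) for all x, y ∈ [0,1]. For a function h : [0,1]² → ℝ define I(h) = ∫_0^1 [ρ·π(u) + 1−ρ]·∫_0^1 π(x)·K̃'( ∫*_{v=u}^{x} π(v) dv )·( ∫*_{y=u}^{x} h(y,u)·m·exp( ρ·∫*_{ξ=y}^{x} π(ξ) dξ ) dy ) dx du. Then |I(f̂) − I(f)| ≤ (m·ζ/ρ)·(e^ρ − 1). -/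

import Mathlib

open MeasureTheory

/-- Circular integral: `∫*_{u=a}^{b} h(u) du` on the circle `[0,1)`.
It equals `∫_a^b h` if `a ≤ b` and `∫_a^1 h + ∫_0^b h` if `a > b`. -/
noncomputable def cint (a b : ℝ) (h : ℝ → ℝ) : ℝ :=
  if a ≤ b then ∫ u in a..b, h u
  else (∫ u in a..(1 : ℝ), h u) + ∫ u in (0 : ℝ)..b, h u

/-!
Write `c(a, x) = ∫*_{a}^{x} π`. For fixed `a`, the map `x ↦ c(a, x)` is, on each of the arcs
`(a, 1]` and `(0, a)`, a continuous monotone primitive of `π`, so it pushes the measure `π(x) dx`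
on `(0, 1]` forward to Lebesgue measure on `(0, 1]`: `∫₀¹ π(x) g(c(a, x)) dx = ∫₀¹ g` for `g ≥ 0`.

The difference `I(f̂) − I(f)` is then estimated layer by layer. Innermost, with
`κ(u) = ζ π(u) / (ρ π(u) + 1 − ρ)` and `c(y, x) = 1 − c(x, y)`, the difference of the `y`-integrals
is at most `κ(u) ∫₀¹ π(y) m e^{ρ c(y,x)} dy = κ(u) m ∫₀¹ e^{ρ(1−t)} dt = κ(u) m (e^ρ − 1)/ρ`.
The `x`-layer costs a factor `∫₀¹ |K̃'| ≤ K̃(1) − K̃(0) ≤ 1`, as `K̃` is monotone on `[0, 1]`.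
The outer weight `ρ π(u) + 1 − ρ` cancels the denominator of `κ(u)`, and `∫₀¹ π = 1`.
-/

open Set Function
open scoped ENNReal

theorem abs_integral_sub_le_of_abs_sub_le {α : Type*} [MeasurableSpace α] {μ : Measure α}
    {F G g : α → ℝ} (hg : Integrable g μ)
    (hFG : AEStronglyMeasurable (fun x => F x - G x) μ)
    (hle : ∀ᵐ x ∂μ, |F x - G x| ≤ g x) :
    |∫ x, F x ∂μ - ∫ x, G x ∂μ| ≤ ∫ x, g x ∂μ := by
  -- If `F` or `G` is not integrable, neither is, and both integrals are the junk value `0`.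
  have hdiff : Integrable (fun x => F x - G x) μ :=
    hg.mono' hFG (by simpa only [Real.norm_eq_abs] using hle)
  by_cases hG : Integrable G μ
  · have hF : Integrable F μ := (hdiff.add hG).congr (.of_forall fun x => by simp)
    rw [← integral_sub hF hG]
    exact (abs_integral_le_integral_abs).trans (integral_mono_ae hdiff.abs hg hle)
  · have hF : ¬Integrable F μ := fun hF => hG ((hF.sub hdiff).congr (.of_forall fun x => by simp))
    rw [integral_undef hF, integral_undef hG, sub_self, abs_zero]
    exact integral_nonneg_of_ae (hle.mono fun x hx => (abs_nonneg _).trans hx)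

theorem abs_intervalIntegral_sub_le {F G g : ℝ → ℝ} {a b : ℝ} (hab : a ≤ b)
    (hg : IntervalIntegrable g volume a b)
    (hFG : AEStronglyMeasurable (fun x => F x - G x) (volume.restrict (Ioc a b)))
    (hle : ∀ᵐ x ∂volume.restrict (Ioc a b), |F x - G x| ≤ g x) :
    |(∫ x in a..b, F x) - ∫ x in a..b, G x| ≤ ∫ x in a..b, g x := by
  simp only [intervalIntegral.integral_of_le hab]
  exact abs_integral_sub_le_of_abs_sub_le hg.1 hFG hle

theorem measurable_setIntegral_Ioc {α : Type*} [MeasurableSpace α] {W : α → ℝ → ℝ}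
    (hW : Measurable (uncurry W)) {e₁ e₂ : α → ℝ} (he₁ : Measurable e₁) (he₂ : Measurable e₂) :
    Measurable fun q => ∫ y in Ioc (e₁ q) (e₂ q), W q y := by
  simp_rw [← integral_indicator measurableSet_Ioc]
  have hset : MeasurableSet {r : α × ℝ | r.2 ∈ Ioc (e₁ r.1) (e₂ r.1)} :=
    (measurableSet_lt (he₁.comp measurable_fst) measurable_snd).inter
      (measurableSet_le measurable_snd (he₂.comp measurable_fst))
  exact ((hW.ite hset measurable_const).stronglyMeasurable.integral_prod_right).measurable

theorem measurable_intervalIntegral {α : Type*} [MeasurableSpace α] {W : α → ℝ → ℝ}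
    (hW : Measurable (uncurry W)) {e₁ e₂ : α → ℝ} (he₁ : Measurable e₁) (he₂ : Measurable e₂) :
    Measurable fun q => ∫ y in e₁ q..e₂ q, W q y :=
  (measurable_setIntegral_Ioc hW he₁ he₂).sub (measurable_setIntegral_Ioc hW he₂ he₁)

theorem measurable_cint {α : Type*} [MeasurableSpace α] {W : α → ℝ → ℝ}
    (hW : Measurable (uncurry W)) {e₁ e₂ : α → ℝ} (he₁ : Measurable e₁) (he₂ : Measurable e₂) :
    Measurable fun q => cint (e₁ q) (e₂ q) (W q) :=
  Measurable.ite (measurableSet_le he₁ he₂) (measurable_intervalIntegral hW he₁ he₂)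
    ((measurable_intervalIntegral hW he₁ measurable_const).add
      (measurable_intervalIntegral hW measurable_const he₂))

theorem exists_preimage_Iic_inter_Ioc_eq_Ioc {Φ : ℝ → ℝ} {a b t : ℝ} (hab : a ≤ b)
    (hc : ContinuousOn Φ (Icc a b)) (hmono : MonotoneOn Φ (Icc a b)) (ht : Φ a ≤ t) :
    ∃ s ∈ Icc a b, Φ s = min (Φ b) t ∧ Φ ⁻¹' Iic t ∩ Ioc a b = Ioc a s := by
  set S := Icc a b ∩ Φ ⁻¹' Iic t
  have hS : IsCompact S :=
    isCompact_Icc.of_isClosed_subset (hc.preimage_isClosed_of_isClosed isClosed_Icc isClosed_Iic)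
      inter_subset_left
  obtain ⟨s, ⟨hsab, hst⟩, hmax⟩ :=
    hS.exists_isGreatest ⟨a, ⟨left_mem_Icc.2 hab, ht⟩⟩
  refine ⟨s, hsab, ?_, ?_⟩
  · rcases le_total (Φ b) t with hbt | htb
    · rw [min_eq_left hbt, le_antisymm hsab.2 (hmax ⟨right_mem_Icc.2 hab, hbt⟩)]
    · obtain ⟨w, hw, hwt⟩ := intermediate_value_Icc hsab.2 (hc.mono (Icc_subset_Icc_left hsab.1))
        ⟨hst, htb⟩
      have hws : w = s :=
        le_antisymm (hmax ⟨⟨hsab.1.trans hw.1, hw.2⟩, hwt.le⟩) hw.1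
      rw [min_eq_right htb, ← hwt, hws]
  · ext w
    refine ⟨fun ⟨hwt, hw⟩ => ⟨hw.1, hmax ⟨Ioc_subset_Icc_self hw, hwt⟩⟩,
      fun hw => ⟨?_, hw.1, hw.2.trans hsab.2⟩⟩
    exact (hmono ⟨hw.1.le, hw.2.trans hsab.2⟩ hsab hw.2).trans hst

theorem map_restrict_Ioc_eq_volume_restrict_Ioc {ν : Measure ℝ} {Φ : ℝ → ℝ} {a b : ℝ}
    (hab : a ≤ b) (hc : ContinuousOn Φ (Icc a b)) (hmono : MonotoneOn Φ (Icc a b))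
    (hν : ∀ s ∈ Icc a b, ν (Ioc a s) = ENNReal.ofReal (Φ s - Φ a)) :
    (ν.restrict (Ioc a b)).map Φ = volume.restrict (Ioc (Φ a) (Φ b)) := by
  have : IsFiniteMeasure (ν.restrict (Ioc a b)) :=
    ⟨by simp [hν b (right_mem_Icc.2 hab)]⟩
  have hΦ : AEMeasurable Φ (ν.restrict (Ioc a b)) :=
    (hc.mono Ioc_subset_Icc_self).aemeasurable measurableSet_Ioc
  refine Measure.ext_of_Iic _ _ fun t => ?_
  rw [Measure.map_apply_of_aemeasurable hΦ measurableSet_Iic,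
    Measure.restrict_apply' measurableSet_Ioc, Measure.restrict_apply' measurableSet_Ioc]
  rcases lt_or_ge t (Φ a) with hta | hat
  · have hempty : Φ ⁻¹' Iic t ∩ Ioc a b = ∅ :=
      eq_empty_of_forall_notMem fun w ⟨hwt, hw⟩ =>
        (hmono (left_mem_Icc.2 hab) (Ioc_subset_Icc_self hw) hw.1.le).not_gt (hwt.trans_lt hta)
    have hempty' : Iic t ∩ Ioc (Φ a) (Φ b) = ∅ :=
      eq_empty_of_forall_notMem fun w ⟨hwt, hw⟩ => (hw.1.trans_le hwt).not_gt hta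
    rw [hempty, hempty', measure_empty, measure_empty]
  · obtain ⟨s, hs, hΦs, hpre⟩ := exists_preimage_Iic_inter_Ioc_eq_Ioc hab hc hmono hat
    rw [hpre, hν s hs, inter_comm, Ioc_inter_Iic, ← hΦs, Real.volume_Ioc]

theorem setLIntegral_ofReal_mul_comp_primitive {π : ℝ → ℝ} {a b : ℝ} (hab : a ≤ b)
    (hπm : Measurable π) (hπi : IntegrableOn π (Icc a b)) (hπnn : ∀ x ∈ Icc a b, 0 ≤ π x)
    (θ : ℝ) {g : ℝ → ℝ≥0∞} (hg : Measurable g) :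
    ∫⁻ w in Ioc a b, ENNReal.ofReal (π w) * g (θ + ∫ t in a..w, π t) =
      ∫⁻ t in Ioc θ (θ + ∫ t in a..b, π t), g t := by
  set Φ : ℝ → ℝ := fun w => θ + ∫ t in a..w, π t
  have hc : ContinuousOn Φ (Icc a b) := by
    have := intervalIntegral.continuousOn_primitive_interval (μ := volume)
      (by rwa [uIcc_of_le hab])
    rw [uIcc_of_le hab] at this
    exact continuousOn_const.add this
  have hmono : MonotoneOn Φ (Icc a b) := fun v hv w hw hvw =>
    add_le_add_right (intervalIntegral.integral_mono_interval le_rfl hv.1 hvw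
      ((ae_restrict_iff' measurableSet_Ioc).2 (.of_forall fun x hx => hπnn x
        ⟨hx.1.le, hx.2.trans hw.2⟩))
      ((intervalIntegrable_iff_integrableOn_Icc_of_le hw.1).2
        (hπi.mono_set (Icc_subset_Icc le_rfl hw.2)))) θ
  have hν : ∀ s ∈ Icc a b, volume.withDensity (fun w => ENNReal.ofReal (π w)) (Ioc a s) =
      ENNReal.ofReal (Φ s - Φ a) := by
    intro s hs
    have hsub : Ioc a s ⊆ Icc a b := Ioc_subset_Icc_self.trans (Icc_subset_Icc le_rfl hs.2)
    rw [withDensity_apply _ measurableSet_Ioc, ← ofReal_integral_eq_lintegral_ofReal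
      (hπi.mono_set hsub) ((ae_restrict_iff' measurableSet_Ioc).2 (.of_forall fun x hx =>
        hπnn x (hsub hx)))]
    simp [Φ, intervalIntegral.integral_of_le hs.1]
  have hmap := map_restrict_Ioc_eq_volume_restrict_Ioc hab hc hmono hν
  simp only [Φ, intervalIntegral.integral_same, add_zero] at hmap
  rw [← hmap, lintegral_map' hg.aemeasurable
      ((hc.mono Ioc_subset_Icc_self).aemeasurable measurableSet_Ioc),
    setLIntegral_withDensity_eq_setLIntegral_mul_non_measurable _ hπm.ennreal_ofReal _
      measurableSet_Ioc (.of_forall fun _ => ENNReal.ofReal_lt_top)]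
  rfl

theorem IntervalIntegrable.mono_zero_one {h : ℝ → ℝ} (hh : IntervalIntegrable h volume 0 1)
    {a b : ℝ} (ha : a ∈ Icc (0 : ℝ) 1) (hb : b ∈ Icc (0 : ℝ) 1) :
    IntervalIntegrable h volume a b :=
  hh.mono_set (uIcc_subset_uIcc (by rwa [uIcc_of_le zero_le_one]) (by rwa [uIcc_of_le zero_le_one]))

theorem cint_add_cint_swap {h : ℝ → ℝ} (hh : IntervalIntegrable h volume 0 1) {a b : ℝ}
    (ha : a ∈ Icc (0 : ℝ) 1) (hb : b ∈ Icc (0 : ℝ) 1) (hne : a ≠ b) :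
    cint a b h + cint b a h = ∫ t in (0 : ℝ)..1, h t := by
  have h0 := left_mem_Icc.2 (zero_le_one' ℝ)
  have h1 := right_mem_Icc.2 (zero_le_one' ℝ)
  rcases hne.lt_or_gt with hab | hba
  · rw [cint, cint, if_pos hab.le, if_neg hab.not_ge,
      ← intervalIntegral.integral_add_adjacent_intervals (hh.mono_zero_one h0 ha)
        (hh.mono_zero_one ha h1),
      ← intervalIntegral.integral_add_adjacent_intervals (hh.mono_zero_one ha hb)
        (hh.mono_zero_one hb h1)]
    ring
  · rw [cint, cint, if_neg hba.not_ge, if_pos hba.le,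
      ← intervalIntegral.integral_add_adjacent_intervals (hh.mono_zero_one h0 hb)
        (hh.mono_zero_one hb h1),
      ← intervalIntegral.integral_add_adjacent_intervals (hh.mono_zero_one hb ha)
        (hh.mono_zero_one ha h1)]
    ring

theorem lintegral_ofReal_mul_comp_cint {π : ℝ → ℝ} (hπm : Measurable π)
    (hπnn : ∀ x ∈ Icc (0 : ℝ) 1, 0 ≤ π x) (hπ1 : ∫ t in (0 : ℝ)..1, π t = 1) {a : ℝ}
    (ha : a ∈ Icc (0 : ℝ) 1) {g : ℝ → ℝ≥0∞} (hg : Measurable g) :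
    ∫⁻ w in Ioc 0 1, ENNReal.ofReal (π w) * g (cint a w π) = ∫⁻ t in Ioc 0 1, g t := by
  have hπi : IntervalIntegrable π volume 0 1 :=
    intervalIntegral.intervalIntegrable_of_integral_ne_zero (by rw [hπ1]; exact one_ne_zero)
  have hπi' : ∀ {c d : ℝ}, 0 ≤ c → c ≤ d → d ≤ 1 → IntegrableOn π (Icc c d) := fun hc hcd hd =>
    (intervalIntegrable_iff_integrableOn_Icc_of_le hcd).1
      (hπi.mono_zero_one ⟨hc, hcd.trans hd⟩ ⟨hc.trans hcd, hd⟩)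
  set θ := ∫ t in a..1, π t
  have hsplit : (∫ t in (0 : ℝ)..a, π t) + θ = 1 := by
    rw [intervalIntegral.integral_add_adjacent_intervals
      (hπi.mono_zero_one (left_mem_Icc.2 zero_le_one) ha)
      (hπi.mono_zero_one ha (right_mem_Icc.2 zero_le_one)), hπ1]
  have hθ0 : 0 ≤ θ :=
    intervalIntegral.integral_nonneg ha.2 fun x hx => hπnn x ⟨ha.1.trans hx.1, hx.2⟩
  have hθ1 : θ ≤ 1 := by
    have : 0 ≤ ∫ t in (0 : ℝ)..a, π t :=
      intervalIntegral.integral_nonneg ha.1 fun x hx => hπnn x ⟨hx.1, hx.2.trans ha.2⟩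
    linarith
  have hleft : ∫⁻ w in Ioc 0 a, ENNReal.ofReal (π w) * g (cint a w π) =
      ∫⁻ t in Ioc θ 1, g t := by
    rw [setLIntegral_congr_fun_ae measurableSet_Ioc ((Measure.ae_ne volume a).mono
      fun w hwa hw => by rw [cint, if_neg (hw.2.lt_of_ne hwa).not_ge]),
      setLIntegral_ofReal_mul_comp_primitive ha.1 hπm (hπi' le_rfl ha.1 ha.2)
        (fun x hx => hπnn x ⟨hx.1, hx.2.trans ha.2⟩) θ hg, add_comm, hsplit]
  have hright : ∫⁻ w in Ioc a 1, ENNReal.ofReal (π w) * g (cint a w π) =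
      ∫⁻ t in Ioc 0 θ, g t := by
    have := setLIntegral_ofReal_mul_comp_primitive ha.2 hπm (hπi' ha.1 ha.2 le_rfl)
      (fun x hx => hπnn x ⟨ha.1.trans hx.1, hx.2⟩) 0 hg
    simp only [zero_add] at this
    rw [← this]
    exact setLIntegral_congr_fun measurableSet_Ioc fun w hw => by rw [cint, if_pos hw.1.le]
  calc ∫⁻ w in Ioc 0 1, ENNReal.ofReal (π w) * g (cint a w π)
      = ∫⁻ w in Ioc 0 a ∪ Ioc a 1, ENNReal.ofReal (π w) * g (cint a w π) := by
        rw [Ioc_union_Ioc_eq_Ioc ha.1 ha.2]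
    _ = ∫⁻ t in Ioc θ 1 ∪ Ioc 0 θ, g t := by
        rw [lintegral_union measurableSet_Ioc (Ioc_disjoint_Ioc_of_le le_rfl),
          lintegral_union measurableSet_Ioc (Ioc_disjoint_Ioc_of_le le_rfl).symm, hleft, hright]
    _ = ∫⁻ t in Ioc 0 1, g t := by rw [union_comm, Ioc_union_Ioc_eq_Ioc hθ0 hθ1]

theorem measurable_cint_right {π : ℝ → ℝ} (hπm : Measurable π) (a : ℝ) :
    Measurable fun w => cint a w π :=
  measurable_cint (W := fun _ => π) (hπm.comp measurable_snd) measurable_const measurable_id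

theorem lintegral_ofReal_mul_comp_cint' {π : ℝ → ℝ} (hπm : Measurable π)
    (hπnn : ∀ x ∈ Icc (0 : ℝ) 1, 0 ≤ π x) (hπ1 : ∫ t in (0 : ℝ)..1, π t = 1) {a : ℝ}
    (ha : a ∈ Icc (0 : ℝ) 1) {g : ℝ → ℝ} (hg : Measurable g) :
    ∫⁻ w in Ioc 0 1, ENNReal.ofReal (π w * g (cint a w π)) =
      ∫⁻ t in Ioc 0 1, ENNReal.ofReal (g t) := by
  rw [← lintegral_ofReal_mul_comp_cint hπm hπnn hπ1 ha hg.ennreal_ofReal]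
  exact setLIntegral_congr_fun measurableSet_Ioc fun w hw =>
    ENNReal.ofReal_mul (hπnn w (Ioc_subset_Icc_self hw))

theorem integral_mul_comp_cint {π : ℝ → ℝ} (hπm : Measurable π)
    (hπnn : ∀ x ∈ Icc (0 : ℝ) 1, 0 ≤ π x) (hπ1 : ∫ t in (0 : ℝ)..1, π t = 1) {a : ℝ}
    (ha : a ∈ Icc (0 : ℝ) 1) {g : ℝ → ℝ} (hg : Measurable g) (hg0 : ∀ t, 0 ≤ g t) :
    ∫ w in Ioc 0 1, π w * g (cint a w π) = ∫ t in Ioc 0 1, g t := by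
  rw [integral_eq_lintegral_of_nonneg_ae, integral_eq_lintegral_of_nonneg_ae (.of_forall hg0)
    hg.aestronglyMeasurable, lintegral_ofReal_mul_comp_cint' hπm hπnn hπ1 ha hg]
  · exact (ae_restrict_iff' measurableSet_Ioc).2
      (.of_forall fun w hw => mul_nonneg (hπnn w (Ioc_subset_Icc_self hw)) (hg0 _))
  · exact (hπm.mul (hg.comp (measurable_cint_right hπm a))).aestronglyMeasurable

theorem integrableOn_mul_comp_cint {π : ℝ → ℝ} (hπm : Measurable π)
    (hπnn : ∀ x ∈ Icc (0 : ℝ) 1, 0 ≤ π x) (hπ1 : ∫ t in (0 : ℝ)..1, π t = 1) {a : ℝ}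
    (ha : a ∈ Icc (0 : ℝ) 1) {g : ℝ → ℝ} (hg : Measurable g) (hg0 : ∀ t, 0 ≤ g t)
    (hgi : IntegrableOn g (Ioc 0 1)) :
    IntegrableOn (fun w => π w * g (cint a w π)) (Ioc 0 1) := by
  refine ⟨(hπm.mul (hg.comp (measurable_cint_right hπm a))).aestronglyMeasurable, ?_⟩
  rw [hasFiniteIntegral_iff_ofReal ((ae_restrict_iff' measurableSet_Ioc).2
      (.of_forall fun w hw => mul_nonneg (hπnn w (Ioc_subset_Icc_self hw)) (hg0 _))),
    lintegral_ofReal_mul_comp_cint' hπm hπnn hπ1 ha hg,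
    ← hasFiniteIntegral_iff_ofReal (.of_forall hg0)]
  exact hgi.2

theorem abs_cint_sub_le {F G g : ℝ → ℝ} {a b : ℝ} (ha : a ∈ Icc (0 : ℝ) 1)
    (hb : b ∈ Icc (0 : ℝ) 1) (hg : IntervalIntegrable g volume 0 1)
    (hFG : AEStronglyMeasurable (fun x => F x - G x) (volume.restrict (Ioc 0 1)))
    (hle : ∀ᵐ x ∂volume.restrict (Ioc 0 1), |F x - G x| ≤ g x) :
    |cint a b F - cint a b G| ≤ ∫ x in (0 : ℝ)..1, g x := by
  have h0 := left_mem_Icc.2 (zero_le_one' ℝ)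
  have h1 := right_mem_Icc.2 (zero_le_one' ℝ)
  have hg0 : 0 ≤ᵐ[volume.restrict (Ioc 0 1)] g := hle.mono fun x hx => (abs_nonneg _).trans hx
  have piece : ∀ {c d : ℝ}, c ∈ Icc (0 : ℝ) 1 → d ∈ Icc (0 : ℝ) 1 → c ≤ d →
      |(∫ x in c..d, F x) - ∫ x in c..d, G x| ≤ ∫ x in c..d, g x := fun hc hd hcd =>
    abs_intervalIntegral_sub_le hcd (hg.mono_zero_one hc hd)
      (hFG.mono_set (Ioc_subset_Ioc hc.1 hd.2))
      (ae_restrict_of_ae_restrict_of_subset (Ioc_subset_Ioc hc.1 hd.2) hle)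
  have mono : ∀ {c d : ℝ}, c ∈ Icc (0 : ℝ) 1 → d ∈ Icc (0 : ℝ) 1 → c ≤ d →
      ∫ x in c..d, g x ≤ ∫ x in (0 : ℝ)..1, g x := fun hc hd hcd =>
    intervalIntegral.integral_mono_interval hc.1 hcd hd.2 hg0 hg
  rcases le_or_gt a b with hab | hba
  · rw [cint, cint, if_pos hab, if_pos hab]
    exact (piece ha hb hab).trans (mono ha hb hab)
  · rw [cint, cint, if_neg hba.not_ge, if_neg hba.not_ge, add_sub_add_comm]
    calc _ ≤ |(∫ x in a..1, F x) - ∫ x in a..1, G x| +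
          |(∫ x in (0 : ℝ)..b, F x) - ∫ x in (0 : ℝ)..b, G x| := abs_add_le _ _
      _ ≤ (∫ x in a..1, g x) + ∫ x in (0 : ℝ)..b, g x :=
          add_le_add (piece ha h1 ha.2) (piece h0 hb hb.1)
      _ ≤ (∫ x in b..1, g x) + ∫ x in (0 : ℝ)..b, g x := by
          gcongr
          exact intervalIntegral.integral_mono_interval hba.le ha.2 le_rfl
            (ae_restrict_of_ae_restrict_of_subset (Ioc_subset_Ioc hb.1 le_rfl) hg0)
            (hg.mono_zero_one hb h1)
      _ = ∫ x in (0 : ℝ)..1, g x := by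
          rw [add_comm, intervalIntegral.integral_add_adjacent_intervals (hg.mono_zero_one h0 hb)
            (hg.mono_zero_one hb h1)]

theorem integral_exp_mul_one_sub {ρ : ℝ} (hρ : ρ ≠ 0) :
    ∫ t in (0 : ℝ)..1, Real.exp (ρ * (1 - t)) = (Real.exp ρ - 1) / ρ := by
  have h := intervalIntegral.integral_comp_sub_left (a := 0) (b := 1) (fun t => Real.exp (ρ * t)) 1
  simp only [sub_self, sub_zero] at h
  rw [h, intervalIntegral.integral_comp_mul_left (fun t => Real.exp t) hρ, integral_exp]
  simp [div_eq_inv_mul]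

theorem abs_intervalIntegral_sub_le_of_le_mul_comp_cint {π : ℝ → ℝ} (hπm : Measurable π)
    (hπnn : ∀ x ∈ Icc (0 : ℝ) 1, 0 ≤ π x) (hπ1 : ∫ t in (0 : ℝ)..1, π t = 1) {a : ℝ}
    (ha : a ∈ Icc (0 : ℝ) 1) {g : ℝ → ℝ} (hg : Measurable g) (hg0 : ∀ t, 0 ≤ g t)
    (hgi : IntervalIntegrable g volume 0 1) {Φ Ψ : ℝ → ℝ}
    (hΦΨ : AEStronglyMeasurable (fun x => Φ x - Ψ x) (volume.restrict (Ioc 0 1)))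
    (hle : ∀ x ∈ Icc (0 : ℝ) 1, |Φ x - Ψ x| ≤ π x * g (cint a x π)) :
    |(∫ x in (0 : ℝ)..1, Φ x) - ∫ x in (0 : ℝ)..1, Ψ x| ≤ ∫ t in (0 : ℝ)..1, g t := by
  calc _ ≤ ∫ x in (0 : ℝ)..1, π x * g (cint a x π) :=
        abs_intervalIntegral_sub_le zero_le_one
          ((intervalIntegrable_iff_integrableOn_Ioc_of_le zero_le_one).2
            (integrableOn_mul_comp_cint hπm hπnn hπ1 ha hg hg0 hgi.1))
          hΦΨ ((ae_restrict_iff' measurableSet_Ioc).2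
            (.of_forall fun x hx => hle x (Ioc_subset_Icc_self hx)))
    _ = ∫ t in (0 : ℝ)..1, g t := by
        simp only [intervalIntegral.integral_of_le zero_le_one]
        exact integral_mul_comp_cint hπm hπnn hπ1 ha hg hg0

theorem abs_cint_mul_exp_sub_le {π : ℝ → ℝ} (hπm : Measurable π)
    (hπnn : ∀ x ∈ Icc (0 : ℝ) 1, 0 ≤ π x) (hπ1 : ∫ t in (0 : ℝ)..1, π t = 1)
    {ρ m c : ℝ} (hρ : ρ ≠ 0) (hm : 0 ≤ m) {F G : ℝ → ℝ} (hFG : Measurable fun y => F y - G y)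
    (hle : ∀ y ∈ Icc (0 : ℝ) 1, |F y - G y| ≤ c * π y) {u x : ℝ}
    (hu : u ∈ Icc (0 : ℝ) 1) (hx : x ∈ Icc (0 : ℝ) 1) :
    |cint u x (fun y => F y * m * Real.exp (ρ * cint y x π)) -
        cint u x (fun y => G y * m * Real.exp (ρ * cint y x π))| ≤
      c * (m * ((Real.exp ρ - 1) / ρ)) := by
  set e : ℝ → ℝ := fun t => Real.exp (ρ * (1 - t))
  have he : Continuous e := by fun_prop
  have hπi : IntervalIntegrable π volume 0 1 :=
    intervalIntegral.intervalIntegrable_of_integral_ne_zero (by rw [hπ1]; exact one_ne_zero)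
  have hcx : Measurable fun y => cint y x π :=
    measurable_cint (W := fun _ => π) (hπm.comp measurable_snd) measurable_id measurable_const
  have hbound : IntegrableOn (fun y => c * m * (π y * e (cint x y π))) (Ioc 0 1) :=
    (integrableOn_mul_comp_cint hπm hπnn hπ1 hx he.measurable (fun _ => (Real.exp_pos _).le)
      he.integrableOn_Ioc).const_mul (c * m)
  refine (abs_cint_sub_le hu hx ((intervalIntegrable_iff_integrableOn_Ioc_of_le zero_le_one).2
    hbound) ?_ ?_).trans_eq ?_
  · refine ((hFG.mul_const m).mul (Real.measurable_exp.comp (hcx.const_mul ρ)))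
      |>.aestronglyMeasurable.congr (.of_forall fun y => ?_)
    simp only [Pi.mul_apply, comp_apply]
    ring
  · filter_upwards [ae_restrict_of_ae (Measure.ae_ne volume x), ae_restrict_mem measurableSet_Ioc]
      with y hyx hy
    have hflip : cint y x π = 1 - cint x y π := by
      rw [← hπ1, ← cint_add_cint_swap hπi (Ioc_subset_Icc_self hy) hx hyx]
      ring
    calc |F y * m * Real.exp (ρ * cint y x π) - G y * m * Real.exp (ρ * cint y x π)|
        = |F y - G y| * m * Real.exp (ρ * cint y x π) := by
          rw [← sub_mul, ← sub_mul, abs_mul, abs_mul, abs_of_nonneg hm,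
            abs_of_pos (Real.exp_pos _)]
      _ ≤ c * π y * m * Real.exp (ρ * cint y x π) := by
          gcongr
          exact hle y (Ioc_subset_Icc_self hy)
      _ = c * m * (π y * e (cint x y π)) := by
          simp only [e, ← hflip]
          ring
  · rw [intervalIntegral.integral_of_le zero_le_one, integral_const_mul,
      integral_mul_comp_cint hπm hπnn hπ1 hx he.measurable (fun _ => (Real.exp_pos _).le),
      ← intervalIntegral.integral_of_le zero_le_one, integral_exp_mul_one_sub hρ]
    ring

theorem integral_abs_deriv_le_of_monotoneOn {f : ℝ → ℝ} {a b : ℝ} (hab : a ≤ b)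
    (hf : MonotoneOn f (Icc a b)) :
    IntervalIntegrable (fun t => |deriv f t|) volume a b ∧
      ∫ t in a..b, |deriv f t| ≤ f b - f a := by
  have hf' : MonotoneOn f (uIcc a b) := by rwa [uIcc_of_le hab]
  have habs : (fun t => |deriv f t|) =ᵐ[volume.restrict (Ioc a b)] deriv f := by
    filter_upwards [ae_restrict_of_ae (Measure.ae_ne volume b), ae_restrict_mem measurableSet_Ioc]
      with t htb ht
    refine abs_of_nonneg ?_
    rw [← derivWithin_of_mem_nhds (Icc_mem_nhds ht.1 (ht.2.lt_of_ne htb))]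
    exact hf.derivWithin_nonneg
  refine ⟨hf'.intervalIntegrable_deriv.abs, ?_⟩
  rw [intervalIntegral.integral_of_le hab, integral_congr_ae habs,
    ← intervalIntegral.integral_of_le hab]
  have := hf'.intervalIntegral_deriv_mem_uIcc
  rw [uIcc_of_le (sub_nonneg.2 (hf (left_mem_Icc.2 hab) (right_mem_Icc.2 hab) hab))] at this
  exact this.2

theorem monotoneOn_tsum_mul_pow {p : ℕ → ℝ} (hp : ∀ k, 0 ≤ p k) (hps : Summable p) :
    MonotoneOn (fun s => ∑' k, p k * s ^ k) (Icc 0 1) := by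
  have hsumm : ∀ s ∈ Icc (0 : ℝ) 1, Summable fun k => p k * s ^ k := fun s hs =>
    hps.of_nonneg_of_le (fun k => mul_nonneg (hp k) (pow_nonneg hs.1 k))
      (fun k => mul_le_of_le_one_right (hp k) (pow_le_one₀ hs.1 hs.2))
  exact fun s hs t ht hst => (hsumm s hs).tsum_le_tsum
    (fun k => mul_le_mul_of_nonneg_left (pow_le_pow_left₀ hs.1 hst k) (hp k)) (hsumm t ht)

theorem integral_abs_deriv_tsum_mul_pow_le_one {p : ℕ → ℝ} (hp : ∀ k, 0 ≤ p k)
    (hsum : HasSum p 1) :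
    IntervalIntegrable (fun t => |deriv (fun s => ∑' k, p k * s ^ k) t|) volume 0 1 ∧
      ∫ t in (0 : ℝ)..1, |deriv (fun s => ∑' k, p k * s ^ k) t| ≤ 1 := by
  obtain ⟨hi, hle⟩ :=
    integral_abs_deriv_le_of_monotoneOn zero_le_one (monotoneOn_tsum_mul_pow hp hsum.summable)
  refine ⟨hi, hle.trans ?_⟩
  have h0 : 0 ≤ ∑' k, p k * (0 : ℝ) ^ k :=
    tsum_nonneg fun k => mul_nonneg (hp k) (pow_nonneg le_rfl k)
  simp only [one_pow, mul_one, hsum.tsum_eq]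
  linarith

noncomputable def sojournIntegrand (π K : ℝ → ℝ) (ρ m : ℝ) (h : ℝ → ℝ → ℝ) (u x : ℝ) : ℝ :=
  π x * deriv K (cint u x π) * cint u x (fun y => h y u * m * Real.exp (ρ * cint y x π))

theorem measurable_uncurry_sojournIntegrand {π : ℝ → ℝ} (hπm : Measurable π) (K : ℝ → ℝ)
    (ρ m : ℝ) {h : ℝ → ℝ → ℝ} (hh : Measurable (uncurry h)) :
    Measurable (uncurry (sojournIntegrand π K ρ m h)) := by
  have hc : Measurable fun q : ℝ × ℝ => cint q.1 q.2 π :=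
    measurable_cint (W := fun _ => π) (hπm.comp measurable_snd) measurable_fst measurable_snd
  have hW : Measurable (uncurry fun (q : ℝ × ℝ) y => h y q.1 * m * Real.exp (ρ * cint y q.2 π)) :=
    ((hh.comp (measurable_snd.prodMk (measurable_fst.comp measurable_fst))).mul_const m).mul
      (Real.measurable_exp.comp
        ((hc.comp (measurable_snd.prodMk (measurable_snd.comp measurable_fst))).const_mul ρ))
  exact ((hπm.comp measurable_snd).mul ((measurable_deriv K).comp hc)).mul
    (measurable_cint hW measurable_fst measurable_snd)

theorem abs_integral_sojournIntegrand_sub_le {π : ℝ → ℝ} (hπm : Measurable π)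
    (hπnn : ∀ x ∈ Icc (0 : ℝ) 1, 0 ≤ π x) (hπ1 : ∫ t in (0 : ℝ)..1, π t = 1)
    {p : ℕ → ℝ} (hp : ∀ k, 0 ≤ p k) (hsum : HasSum p 1) {ρ m c : ℝ} (hρ : ρ ≠ 0)
    (hm : 0 ≤ m) (hc : 0 ≤ c) {F G : ℝ → ℝ → ℝ} (hF : Measurable (uncurry F))
    (hG : Measurable (uncurry G)) {u : ℝ} (hu : u ∈ Icc (0 : ℝ) 1)
    (hle : ∀ y ∈ Icc (0 : ℝ) 1, |F y u - G y u| ≤ c * π y) :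
    |(∫ x in (0 : ℝ)..1, sojournIntegrand π (fun s => ∑' k, p k * s ^ k) ρ m F u x) -
        ∫ x in (0 : ℝ)..1, sojournIntegrand π (fun s => ∑' k, p k * s ^ k) ρ m G u x| ≤
      c * (m * ((Real.exp ρ - 1) / ρ)) := by
  obtain ⟨hKi, hK1⟩ := integral_abs_deriv_tsum_mul_pow_le_one hp hsum
  have hβ : 0 ≤ c * (m * ((Real.exp ρ - 1) / ρ)) := by
    rw [← integral_exp_mul_one_sub hρ]
    exact mul_nonneg hc (mul_nonneg hm
      (intervalIntegral.integral_nonneg zero_le_one fun _ _ => (Real.exp_pos _).le))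
  refine (abs_intervalIntegral_sub_le_of_le_mul_comp_cint hπm hπnn hπ1 hu
    ((measurable_deriv _).abs.const_mul _) (fun t => mul_nonneg hβ (abs_nonneg _))
    (hKi.const_mul _)
    (((measurable_uncurry_sojournIntegrand hπm _ ρ m hF).sub
      (measurable_uncurry_sojournIntegrand hπm _ ρ m hG)).comp
        measurable_prodMk_left).aestronglyMeasurable
    fun x hx => ?_).trans ?_
  · have hC := abs_cint_mul_exp_sub_le hπm hπnn hπ1 hρ hm
      ((hF.sub hG).comp measurable_prodMk_right) hle hu hx
    simp only [uncurry_apply_pair, sojournIntegrand]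
    rw [← mul_sub, abs_mul, abs_mul, abs_of_nonneg (hπnn x hx)]
    exact (mul_le_mul_of_nonneg_left hC (mul_nonneg (hπnn x hx) (abs_nonneg _))).trans_eq
      (by ring)
  · rw [intervalIntegral.integral_const_mul]
    exact mul_le_of_le_one_right hβ hK1

theorem batch_sojourn_error_propagation_general
    (ρ : ℝ) (hρ : ρ ∈ Set.Ioo (0 : ℝ) 1)
    (π : ℝ → ℝ) (hπmeas : Measurable π)
    (hπnn : ∀ x ∈ Set.Icc (0 : ℝ) 1, 0 ≤ π x)
    (hπ1 : (∫ u in (0 : ℝ)..1, π u) = 1)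
    (p : ℕ → ℝ)
    (hpnn : ∀ k, 0 ≤ p k)
    (hpsum : HasSum p 1)
    (Kt : ℝ → ℝ) (hKt : ∀ s : ℝ, Kt s = ∑' k : ℕ, p k * s ^ k)
    (m ζ : ℝ) (hm : 0 < m) (hζ : 0 < ζ)
    (f fhat : ℝ → ℝ → ℝ)
    (hfmeas : Measurable (Function.uncurry f))
    (hfhatmeas : Measurable (Function.uncurry fhat))
    (hclose : ∀ x ∈ Set.Icc (0 : ℝ) 1, ∀ y ∈ Set.Icc (0 : ℝ) 1,
      |fhat x y - f x y| ≤ ζ * π x * π y / (ρ * π y + (1 - ρ)))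
    (I : (ℝ → ℝ → ℝ) → ℝ)
    (hI : ∀ h : ℝ → ℝ → ℝ,
      I h = ∫ u in (0 : ℝ)..1, (ρ * π u + (1 - ρ)) *
        ∫ x in (0 : ℝ)..1, π x * deriv Kt (cint u x π) *
          cint u x (fun y => h y u * m * Real.exp (ρ * cint y x π))) :
    |I fhat - I f| ≤ m * ζ / ρ * (Real.exp ρ - 1) := by
  obtain ⟨hρ0, hρ1⟩ := hρ
  obtain rfl : Kt = fun s => ∑' k, p k * s ^ k := funext hKt
  have hden : ∀ u ∈ Icc (0 : ℝ) 1, 0 < ρ * π u + (1 - ρ) := fun u hu => by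
    nlinarith [hπnn u hu]
  have hmeas := fun h hh => ((hπmeas.const_mul ρ).add_const (1 - ρ)).mul
    (measurable_intervalIntegral (measurable_uncurry_sojournIntegrand hπmeas
      (fun s => ∑' k, p k * s ^ k) ρ m (h := h) hh) (measurable_const (a := (0 : ℝ)))
      (measurable_const (a := (1 : ℝ))))
  rw [hI, hI]
  calc _ ≤ ∫ u in (0 : ℝ)..1, ζ * (m * ((Real.exp ρ - 1) / ρ)) * π u := by
        refine abs_intervalIntegral_sub_le zero_le_one
          ((intervalIntegral.intervalIntegrable_of_integral_ne_zero (f := π)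
            (by rw [hπ1]; exact one_ne_zero)).const_mul _)
          ((hmeas fhat hfhatmeas).sub (hmeas f hfmeas)).aestronglyMeasurable
          ((ae_restrict_iff' measurableSet_Ioc).2 (.of_forall fun u hu => ?_))
        have hu' := Ioc_subset_Icc_self hu
        have hinner := abs_integral_sojournIntegrand_sub_le hπmeas hπnn hπ1 hpnn hpsum
          hρ0.ne' hm.le (div_nonneg (mul_nonneg hζ.le (hπnn u hu')) (hden u hu').le)
          hfhatmeas hfmeas hu' fun y hy => (hclose y hy u hu').trans_eq (by ring)
        rw [← mul_sub, abs_mul, abs_of_pos (hden u hu')]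
        refine (mul_le_mul_of_nonneg_left hinner (hden u hu').le).trans_eq ?_
        field_simp [(hden u hu').ne']
    _ = m * ζ / ρ * (Real.exp ρ - 1) := by
        rw [intervalIntegral.integral_const_mul, hπ1]
        ring

/-- Propagation of the approximation error of `f_K` into the mean batch
sojourn time: if `|f̂ − f| ≤ ζ·π(x)π(y)/(ρπ(y)+1−ρ)`, then the functional `I`
(the `f_K`-dependent term of `E[S^B]`) satisfies
`|I(f̂) − I(f)| ≤ (mζ/ρ)(e^ρ − 1)`. -/
theorem batch_sojourn_error_propagation
    (ρ : ℝ) (hρ : ρ ∈ Set.Ioo (0 : ℝ) 1)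
    (π : ℝ → ℝ) (hπmeas : Measurable π)
    (hπnn : ∀ x ∈ Set.Icc (0 : ℝ) 1, 0 ≤ π x)
    (hπbd : ∃ M : ℝ, ∀ x ∈ Set.Icc (0 : ℝ) 1, π x ≤ M)
    (hπ1 : (∫ u in (0 : ℝ)..1, π u) = 1)
    (p : ℕ → ℝ) (hp0 : p 0 = 0)
    (hpnn : ∀ k, 0 ≤ p k) (hple : ∀ k, p k ≤ 1)
    (hpsum : HasSum p 1)
    (Kt : ℝ → ℝ) (hKt : ∀ s : ℝ, Kt s = ∑' k : ℕ, p k * s ^ k)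
    (m ζ : ℝ) (hm : 0 < m) (hζ : 0 < ζ)
    (f fhat : ℝ → ℝ → ℝ)
    (hfmeas : Measurable (Function.uncurry f))
    (hfhatmeas : Measurable (Function.uncurry fhat))
    (hclose : ∀ x ∈ Set.Icc (0 : ℝ) 1, ∀ y ∈ Set.Icc (0 : ℝ) 1,
      |fhat x y - f x y| ≤ ζ * π x * π y / (ρ * π y + (1 - ρ)))
    (I : (ℝ → ℝ → ℝ) → ℝ)
    (hI : ∀ h : ℝ → ℝ → ℝ,
      I h = ∫ u in (0 : ℝ)..1, (ρ * π u + (1 - ρ)) *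
        ∫ x in (0 : ℝ)..1, π x * deriv Kt (cint u x π) *
          cint u x (fun y => h y u * m * Real.exp (ρ * cint y x π))) :
    |I fhat - I f| ≤ m * ζ / ρ * (Real.exp ρ - 1) :=
  batch_sojourn_error_propagation_general ρ hρ π hπmeas hπnn hπ1 p hpnn hpsum Kt hKt m ζ hm hζ f
    fhat hfmeas hfhatmeas hclose I hI
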